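/- Let char k = 5 and G = Sp_4 over k, with fundamental weights ω_1, ω_2. In the irreducible G-module L(ω_1+ω_2) with weight basis {u_λ} as specified, the subspace W of Sym²(L(ω_1+ω_2)) of weight 2ω_1 = 2ε_1 annihilated by the root operators x_{α_1} and x_{α_2} is one-dimensional: writing f = α·u_{ε_1+2ε_2}u_{ε_1−2ε_2} + β·u_{2ε_1+ε_2}u_{−ε_2} + γ·u_{2ε_1−ε_2}u_{ε_2} + δ·u_{ε_1}², the conditions x_{α_1}·f = 0 and x_{α_2}·f = 0 are equivalent to the linear system α + 2β = 0, γ − 2δ = 0, α + δ = 0, β + γ = 0, whose solution space is one-dimensional. -/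

import Mathlib

/-!
STATEMENT 17: `char k = 5`, `G = Sp₄`, `L(ω₁+ω₂)` the 12-dimensional irreducible
module with weight basis `u_λ` (weights `±2ε₁±ε₂, ±ε₁±2ε₂, ±ε₁, ±ε₂`).  In
`Sym²(L(ω₁+ω₂))`, the subspace of weight `2ε₁` annihilated by the root operators
`x_{α₁}, x_{α₂}` is one-dimensional: for
`f = α·u_{ε₁+2ε₂}u_{ε₁-2ε₂} + β·u_{2ε₁+ε₂}u_{-ε₂} + γ·u_{2ε₁-ε₂}u_{ε₂} + δ·u_{ε₁}²`,
the conditions `x_{α₁}·f = 0` and `x_{α₂}·f = 0` are equivalent to the linear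
system `α + 2β = 0`, `γ - 2δ = 0`, `α + δ = 0`, `β + γ = 0`, whose solution space
is one-dimensional.

Basis indexing of `L(ω₁+ω₂)`:
0: 2ε₁+ε₂, 1: 2ε₁-ε₂, 2: ε₁+2ε₂, 3: ε₁-2ε₂, 4: -2ε₁+ε₂, 5: -2ε₁-ε₂,
6: -ε₁-2ε₂, 7: -ε₁+2ε₂, 8: ε₁, 9: ε₂, 10: -ε₂, 11: -ε₁.
The matrices `A₁, A₂` of `x_{α₁}, x_{α₂}` are read off the root-group formulas;
`Sym²` is modelled by symmetric tensors (symmetric `12 × 12` matrices, with the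
monomial `u_λ u_μ ↦ E_{λμ} + E_{μλ}`), with `x·z = A z + z Aᵀ`.
-/

open Matrix

namespace Stmt17

variable (k : Type*) [Field k]

def E (i j : Fin 12) : Matrix (Fin 12) (Fin 12) k := Matrix.single i j 1

/-- The operator `x_{α₁}` on `L(ω₁+ω₂)`. -/
def A1 : Matrix (Fin 12) (Fin 12) k :=
  -(E k 6 5) - E k 11 4 - E k 10 11 + (2 : k) • E k 3 10 + E k 9 7 +
    (2 : k) • E k 8 9 - (2 : k) • E k 1 8 + E k 0 2

/-- The operator `x_{α₂}` on `L(ω₁+ω₂)`. -/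
def A2 : Matrix (Fin 12) (Fin 12) k :=
  E k 4 5 + (2 : k) • E k 11 6 + E k 7 11 + E k 9 10 + (2 : k) • E k 8 3 +
    E k 2 8 + E k 0 1

/-- The symmetrized monomial `u_i u_j` in `Sym²(L(ω₁+ω₂))`. -/
def symm (i j : Fin 12) : Matrix (Fin 12) (Fin 12) k := E k i j + E k j i

/-- The general weight-`2ε₁` vector `f` in `Sym²(L(ω₁+ω₂))`. -/
def f (α β γ δ : k) : Matrix (Fin 12) (Fin 12) k :=
  α • symm k 2 3 + β • symm k 0 10 + γ • symm k 1 9 + δ • symm k 8 8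

/-- The Leibniz action of an operator `A` on symmetric tensors. -/
def rho (A z : Matrix (Fin 12) (Fin 12) k) : Matrix (Fin 12) (Fin 12) k :=
  A * z + z * Aᵀ

/-- The coefficient matrix of the linear system
`α + 2β = 0, γ - 2δ = 0, α + δ = 0, β + γ = 0`. -/
def sys : Matrix (Fin 4) (Fin 4) k := !![1, 2, 0, 0; 0, 0, 1, -2; 1, 0, 0, 1; 0, 1, 1, 0]

end Stmt17

/-
Each root operator sends `f` to a combination of two distinct monomials whose coefficients are
the four linear forms of the system, two of them multiplied by `2`, a unit in characteristic `5`.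
The system has determinant `5`; in characteristic `5` its first, third and fourth equations cut
out the line through `(1, 2, 3, -1)`, on which the second holds as well.
-/

namespace Stmt17

variable {k : Type*} [Field k]

lemma rho_A1_f (α β γ δ : k) :
    rho k (A1 k) (f k α β γ δ) = (α + 2 * β) • symm k 0 3 + (2 * (γ - 2 * δ)) • symm k 1 8 := by
  simp only [rho, A1, f, symm, E, transpose_add, transpose_sub, transpose_neg, transpose_smul,
    transpose_single, add_mul, mul_add, sub_mul, mul_sub, neg_mul, mul_neg, smul_mul_assoc,
    mul_smul_comm, single_mul_single_same, single_mul_single_of_ne, ne_eq, Fin.reduceEq,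
    not_false_eq_true, smul_zero, add_zero, zero_add, mul_one]
  module

lemma rho_A2_f (α β γ δ : k) :
    rho k (A2 k) (f k α β γ δ) = (β + γ) • symm k 0 9 + (2 * (α + δ)) • symm k 2 8 := by
  simp only [rho, A2, f, symm, E, transpose_add, transpose_smul, transpose_single, add_mul,
    mul_add, smul_mul_assoc, mul_smul_comm, single_mul_single_same, single_mul_single_of_ne,
    ne_eq, Fin.reduceEq, not_false_eq_true, smul_zero, add_zero, zero_add, mul_one]
  module

lemma symm_apply_of_ne {i j : Fin 12} (hij : i ≠ j) : symm k i j i j = 1 := by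
  simp [symm, E, hij]

lemma symm_apply_eq_zero {i j a b : Fin 12} (h₁ : ¬(i = a ∧ j = b)) (h₂ : ¬(j = a ∧ i = b)) :
    symm k i j a b = 0 := by
  simp [symm, E, h₁, h₂]

lemma smul_symm_add_smul_symm_eq_zero_iff {i j i' j' : Fin 12} (hij : i ≠ j) (hij' : i' ≠ j')
    (hi : i ≠ i') (hj : j ≠ i') (a b : k) :
    a • symm k i j + b • symm k i' j' = 0 ↔ a = 0 ∧ b = 0 := by
  refine ⟨fun h => ⟨?_, ?_⟩, fun ⟨ha, hb⟩ => by simp [ha, hb]⟩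
  · simpa [symm_apply_of_ne hij, symm_apply_eq_zero (fun h => hi h.1.symm)
      (fun h => hj h.2.symm)] using congrFun₂ h i j
  · simpa [symm_apply_of_ne hij', symm_apply_eq_zero (fun h => hi h.1) (fun h => hj h.1)]
      using congrFun₂ h i' j'

lemma two_ne_zero_of_charP_five [CharP k 5] : (2 : k) ≠ 0 := by
  intro h
  have : (5 : ℕ) ∣ 2 := (CharP.cast_eq_zero_iff k 5 2).mp (by exact_mod_cast h)
  norm_num at this

lemma sys_mulVec (x : Fin 4 → k) :
    sys k *ᵥ x = ![x 0 + 2 * x 1, x 2 - 2 * x 3, x 0 + x 3, x 1 + x 2] := by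
  ext r
  fin_cases r <;> simp [sys, mulVec, dotProduct, Fin.sum_univ_four]; ring

lemma ker_sys_eq_span [CharP k 5] :
    LinearMap.ker (mulVecLin (sys k)) = Submodule.span k {![1, 2, 3, -1]} := by
  have h5 : (5 : k) = 0 := by exact_mod_cast CharP.cast_eq_zero k 5
  ext x
  rw [LinearMap.mem_ker, Submodule.mem_span_singleton, mulVecLin_apply, sys_mulVec]
  constructor
  · intro hx
    have e1 : x 0 + 2 * x 1 = 0 := congrFun hx 0
    have e3 : x 0 + x 3 = 0 := congrFun hx 2
    have e4 : x 1 + x 2 = 0 := congrFun hx 3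
    refine ⟨x 0, funext fun i => ?_⟩
    fin_cases i
    · simp
    · show x 0 * 2 = x 1
      linear_combination 2 * e1 - x 1 * h5
    · show x 0 * 3 = x 2
      linear_combination 3 * e1 - e4 - x 1 * h5
    · show x 0 * -1 = x 3
      linear_combination -e3
  · rintro ⟨c, rfl⟩
    funext r
    fin_cases r <;> simp <;> linear_combination c * h5

end Stmt17

open Stmt17 in
theorem stmt17 (k : Type*) [Field k] [CharP k 5] :
    (∀ α β γ δ : k,
      (rho k (A1 k) (f k α β γ δ) = 0 ∧ rho k (A2 k) (f k α β γ δ) = 0) ↔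
        (α + 2 * β = 0 ∧ γ - 2 * δ = 0 ∧ α + δ = 0 ∧ β + γ = 0)) ∧
    Module.finrank k (LinearMap.ker (Matrix.mulVecLin (sys k))) = 1 := by
  refine ⟨fun α β γ δ => ?_, ?_⟩
  · rw [rho_A1_f, rho_A2_f, smul_symm_add_smul_symm_eq_zero_iff (by decide) (by decide)
      (by decide) (by decide), smul_symm_add_smul_symm_eq_zero_iff (by decide) (by decide)
      (by decide) (by decide), mul_eq_zero, mul_eq_zero,
      or_iff_right two_ne_zero_of_charP_five, or_iff_right two_ne_zero_of_charP_five]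
    tauto
  · rw [ker_sys_eq_span]
    exact finrank_span_singleton fun h => one_ne_zero (congrFun h 0)
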